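/- (Lemma 9) Under Assumption 1, every element of 𝒦̂_{𝒮,ext}^{∞,γ} belongs to 𝒦_all^{∞,γ}: if Z̃ and G̃ are clique-block-diagonal, Q̃ ≻ 0, and there exists ρ ∈ ℝ with Θ_γ(G̃,Q̃,Z̃) + blkdiag(ρG̃ᵀN₀G̃, ρG̃ᵀN₀G̃, 0_{m_v}, 0_l) ≺ 0, then G̃ is invertible, K = (EᵀE)⁻¹Eᵀ Z̃ G̃⁻¹ E satisfies K ∈ 𝒮, and there exists P ≻ 0 such that [[−P⁻¹, A+BK, B_v, 0], [(A+BK)ᵀ, −P, 0, (C+DK)ᵀ], [B_vᵀ, 0, −γI_{m_v}, D_wᵀ], [0, C+DK, D_w, −γI_l]] ≺ 0. -/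

import Mathlib

/-!
The (2,2) block of the extended LMI, `Q̃ - G̃ - G̃ᵀ + ρ G̃ᵀ N₀ G̃ ≺ 0` with `Q̃ ≻ 0`, forces `G̃`
to be invertible. Put `W = G̃⁻¹ E` and `H = Eᵀ W`. Since `G̃ W = E` and `N₀ E = 0`, the congruence
by `W` turns that block into `-P` with `P = H + Hᵀ - Wᵀ Q̃ W`, so `P ≻ 0`, and then `H + Hᵀ ≻ 0`
makes `H` invertible. The congruence of the whole extended LMI by `blkdiag(W H⁻¹, W, I)` is
exactly the closed-loop LMI for `K = (EᵀE)⁻¹ Eᵀ Z̃ G̃⁻¹ E`, except that its (1,1) block is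
`-H⁻ᵀ S H⁻¹` with `S = Wᵀ Q̃ W` instead of `-P⁻¹`. Completing the square gives
`H S⁻¹ Hᵀ ⪰ H + Hᵀ - S = P`, and inverting, `P⁻¹ ⪰ H⁻ᵀ S H⁻¹`, which only makes the
closed-loop LMI more negative.

`K` lies in `𝒮` because `G̃⁻¹` is again clique-block-diagonal, so `Z̃ G̃⁻¹` only couples nodes that
share a clique, and by Assumption 1 these are neighbours.
-/

open Matrix

/-- Block index set: `Idx dims` indexes the rows/columns of an `n × n` matrix
partitioned into blocks of sizes `dims 0, …, dims (N-1)`. -/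
abbrev Idx {N : ℕ} (dims : Fin N → ℕ) : Type := Σ i : Fin N, Fin (dims i)

/-- The sparsity set `𝒮`: the `(i,j)` block vanishes whenever `i ≠ j` and `(i,j) ∉ ℰ`. -/
def Sparse {N : ℕ} (Gr : SimpleGraph (Fin N)) (dims : Fin N → ℕ)
    (K : Matrix (Idx dims) (Idx dims) ℝ) : Prop :=
  ∀ i j : Fin N, i ≠ j → ¬ Gr.Adj i j →
    ∀ (a : Fin (dims i)) (b : Fin (dims j)), K ⟨i, a⟩ ⟨j, b⟩ = 0

/-- Block-diagonal (w.r.t. the partition `dims`): off-diagonal blocks vanish. -/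
def BlkDiag {N : ℕ} (dims : Fin N → ℕ) (K : Matrix (Idx dims) (Idx dims) ℝ) : Prop :=
  ∀ p r : Idx dims, p.1 ≠ r.1 → K p r = 0

/-- `X ≺ 0`: negative definiteness. -/
def NegDef {m : Type*} [Fintype m] (X : Matrix m m ℝ) : Prop := (-X).PosDef

/-- Row index set of the stacked clique selector matrix `E`. -/
abbrev CIdx {N q : ℕ} (dims : Fin N → ℕ) (C : Fin q → Finset (Fin N)) : Type :=
  Σ k : Fin q, Σ j : {x : Fin N // x ∈ C k}, Fin (dims j.1)

/-- The stacked selector matrix `E = [E_{C_1}ᵀ, …, E_{C_q}ᵀ]ᵀ`. -/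
def Emat {N q : ℕ} (dims : Fin N → ℕ) (C : Fin q → Finset (Fin N)) :
    Matrix (CIdx dims C) (Idx dims) ℝ :=
  fun p i => if (⟨p.2.1.1, p.2.2⟩ : Idx dims) = i then 1 else 0

/-- Clique-block-diagonal matrices `blkdiag(X_1, …, X_q)` with `X_k ∈ ℝ^{n_{C_k} × n_{C_k}}`. -/
def CliqueBlkDiag {N q : ℕ} (dims : Fin N → ℕ) (C : Fin q → Finset (Fin N))
    (X : Matrix (CIdx dims C) (CIdx dims C) ℝ) : Prop :=
  ∀ p r : CIdx dims C, p.1 ≠ r.1 → X p r = 0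

/-- `C_1, …, C_q` are cliques of the graph. -/
def IsCliques {N q : ℕ} (Gr : SimpleGraph (Fin N)) (C : Fin q → Finset (Fin N)) : Prop :=
  ∀ k : Fin q, ∀ i ∈ C k, ∀ j ∈ C k, i ≠ j → Gr.Adj i j

/-- Assumption 1: every node is covered, and two distinct nodes share a clique iff adjacent. -/
def Assumption1 {N q : ℕ} (Gr : SimpleGraph (Fin N)) (C : Fin q → Finset (Fin N)) : Prop :=
  (∀ i : Fin N, ∃ k, i ∈ C k) ∧
    ∀ i j : Fin N, i ≠ j → ((∃ k, i ∈ C k ∧ j ∈ C k) ↔ Gr.Adj i j)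

/-- `N₀ = I − E (EᵀE)⁻¹ Eᵀ`. -/
noncomputable def N0 {N q : ℕ} (dims : Fin N → ℕ) (C : Fin q → Finset (Fin N)) :
    Matrix (CIdx dims C) (CIdx dims C) ℝ :=
  1 - Emat dims C * ((Emat dims C)ᵀ * Emat dims C)⁻¹ * (Emat dims C)ᵀ

/-- `M = blkdiag(N₀, N₀)`. -/
noncomputable def Mmat {N q : ℕ} (dims : Fin N → ℕ) (C : Fin q → Finset (Fin N)) :
    Matrix (CIdx dims C ⊕ CIdx dims C) (CIdx dims C ⊕ CIdx dims C) ℝ :=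
  fromBlocks (N0 dims C) 0 0 (N0 dims C)

/-- Dilation `X̃ = E X (EᵀE)⁻¹ Eᵀ`. -/
noncomputable def tilde {N q : ℕ} (dims : Fin N → ℕ) (C : Fin q → Finset (Fin N))
    (X : Matrix (Idx dims) (Idx dims) ℝ) : Matrix (CIdx dims C) (CIdx dims C) ℝ :=
  Emat dims C * X * ((Emat dims C)ᵀ * Emat dims C)⁻¹ * (Emat dims C)ᵀ

/-- The gain `(EᵀE)⁻¹ Eᵀ Z̃ G̃⁻¹ E`. -/
noncomputable def gainCl {N q : ℕ} (dims : Fin N → ℕ) (C : Fin q → Finset (Fin N))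
    (Zt Gt : Matrix (CIdx dims C) (CIdx dims C) ℝ) : Matrix (Idx dims) (Idx dims) ℝ :=
  ((Emat dims C)ᵀ * Emat dims C)⁻¹ * (Emat dims C)ᵀ * Zt * Gt⁻¹ * Emat dims C

/-- `Θ_γ(G̃, Q̃, Z̃)`. -/
noncomputable def Theta {N q mv l : ℕ} (dims : Fin N → ℕ) (C : Fin q → Finset (Fin N))
    (A B : Matrix (Idx dims) (Idx dims) ℝ) (Bv : Matrix (Idx dims) (Fin mv) ℝ)
    (Cm Dm : Matrix (Fin l) (Idx dims) ℝ) (Dw : Matrix (Fin l) (Fin mv) ℝ) (γ : ℝ)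
    (Gt Qt Zt : Matrix (CIdx dims C) (CIdx dims C) ℝ) :
    Matrix ((CIdx dims C ⊕ CIdx dims C) ⊕ (Fin mv ⊕ Fin l))
      ((CIdx dims C ⊕ CIdx dims C) ⊕ (Fin mv ⊕ Fin l)) ℝ :=
  fromBlocks
    (fromBlocks (-Qt) (tilde dims C A * Gt + tilde dims C B * Zt)
      (tilde dims C A * Gt + tilde dims C B * Zt)ᵀ (Qt - Gt - Gtᵀ))
    (fromBlocks (Emat dims C * Bv) 0 0
      (Cm * ((Emat dims C)ᵀ * Emat dims C)⁻¹ * (Emat dims C)ᵀ * Gt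
        + Dm * ((Emat dims C)ᵀ * Emat dims C)⁻¹ * (Emat dims C)ᵀ * Zt)ᵀ)
    (fromBlocks (Emat dims C * Bv)ᵀ 0 0
      (Cm * ((Emat dims C)ᵀ * Emat dims C)⁻¹ * (Emat dims C)ᵀ * Gt
        + Dm * ((Emat dims C)ᵀ * Emat dims C)⁻¹ * (Emat dims C)ᵀ * Zt))
    (fromBlocks (-(γ • (1 : Matrix (Fin mv) (Fin mv) ℝ))) Dwᵀ Dw
      (-(γ • (1 : Matrix (Fin l) (Fin l) ℝ))))

/-- The closed-loop bounded-real LMI matrix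
`[[−P⁻¹, A+BK, B_v, 0], [(A+BK)ᵀ, −P, 0, (C+DK)ᵀ], [B_vᵀ, 0, −γI, D_wᵀ], [0, C+DK, D_w, −γI]]`. -/
noncomputable def BRLclosed {N mv l : ℕ} (dims : Fin N → ℕ)
    (A B : Matrix (Idx dims) (Idx dims) ℝ) (Bv : Matrix (Idx dims) (Fin mv) ℝ)
    (Cm Dm : Matrix (Fin l) (Idx dims) ℝ) (Dw : Matrix (Fin l) (Fin mv) ℝ) (γ : ℝ)
    (K P : Matrix (Idx dims) (Idx dims) ℝ) :
    Matrix ((Idx dims ⊕ Idx dims) ⊕ (Fin mv ⊕ Fin l))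
      ((Idx dims ⊕ Idx dims) ⊕ (Fin mv ⊕ Fin l)) ℝ :=
  fromBlocks
    (fromBlocks (-(P⁻¹)) (A + B * K) (A + B * K)ᵀ (-P))
    (fromBlocks Bv 0 0 (Cm + Dm * K)ᵀ)
    (fromBlocks Bvᵀ 0 0 (Cm + Dm * K))
    (fromBlocks (-(γ • (1 : Matrix (Fin mv) (Fin mv) ℝ))) Dwᵀ Dw
      (-(γ • (1 : Matrix (Fin l) (Fin l) ℝ))))

/-- `blkdiag(X, X, 0_{m_v}, 0_l)`. -/
def Pert {N q : ℕ} (dims : Fin N → ℕ) (C : Fin q → Finset (Fin N)) (mv l : ℕ)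
    (X : Matrix (CIdx dims C) (CIdx dims C) ℝ) :
    Matrix ((CIdx dims C ⊕ CIdx dims C) ⊕ (Fin mv ⊕ Fin l))
      ((CIdx dims C ⊕ CIdx dims C) ⊕ (Fin mv ⊕ Fin l)) ℝ :=
  fromBlocks (fromBlocks X 0 0 X) 0 0 0

namespace Matrix

variable {m n p r : Type*}

theorem PosDef.posSemidef_inv_sub_inv [Fintype n] [DecidableEq n] {A B : Matrix n n ℝ}
    (hA : A.PosDef) (hB : B.PosDef) (hAB : (B - A).PosSemidef) :
    (A⁻¹ - B⁻¹).PosSemidef := by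
  -- both sides are Schur complements in `[[B, 1], [1, A⁻¹]]`
  have := hB.isUnit.invertible
  have := hA.inv.isUnit.invertible
  have hM := (PosDef.fromBlocks₂₂ B (1 : Matrix n n ℝ) hA.inv).mpr (by
    simpa [nonsing_inv_nonsing_inv _ ((isUnit_iff_isUnit_det A).mp hA.isUnit)] using hAB)
  simpa using (PosDef.fromBlocks₁₁ (1 : Matrix n n ℝ) A⁻¹ hB).mp (by simpa using hM)

theorem PosSemidef.fromBlocks_zero₂₂ [Fintype m] [Fintype n] {X : Matrix m m ℝ}
    (hX : X.PosSemidef) : (fromBlocks X 0 0 (0 : Matrix n n ℝ)).PosSemidef := by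
  classical
  have h := hX.conjTranspose_mul_mul_same (fromCols (1 : Matrix m m ℝ) (0 : Matrix m n ℝ))
  rwa [conjTranspose_fromCols_eq_fromRows_conjTranspose, fromRows_mul, fromRows_mul_fromCols,
    conjTranspose_one, conjTranspose_zero, Matrix.one_mul, Matrix.zero_mul, Matrix.mul_one,
    Matrix.mul_zero, Matrix.zero_mul, Matrix.zero_mul] at h

theorem fromBlocks_mulVec_injective [Fintype n] [Fintype r] {R₁ : Matrix m n ℝ}
    {R₂ : Matrix p r ℝ} (h₁ : Function.Injective R₁.mulVec)
    (h₂ : Function.Injective R₂.mulVec) :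
    Function.Injective (fromBlocks R₁ 0 0 R₂).mulVec := by
  intro x y hxy
  have hl : x ∘ Sum.inl = y ∘ Sum.inl := h₁ <| funext fun i => by
    simpa [fromBlocks_mulVec] using congrFun hxy (Sum.inl i)
  have hr : x ∘ Sum.inr = y ∘ Sum.inr := h₂ <| funext fun i => by
    simpa [fromBlocks_mulVec] using congrFun hxy (Sum.inr i)
  rw [← Sum.elim_comp_inl_inr x, ← Sum.elim_comp_inl_inr y, hl, hr]

theorem fromBlocks_transpose_mul_fromBlocks_mul_fromBlocks {α : Type*} [CommRing α]
    {m' n' p' r' : Type*} [Fintype m] [Fintype p] [Fintype m'] [Fintype p']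
    (R₁ : Matrix m n α) (R₂ : Matrix p r α) (S₁ : Matrix m' n' α) (S₂ : Matrix p' r' α)
    (A : Matrix m m' α) (B : Matrix m p' α) (C : Matrix p m' α) (D : Matrix p p' α) :
    (fromBlocks R₁ 0 0 R₂)ᵀ * fromBlocks A B C D * fromBlocks S₁ 0 0 S₂ =
      fromBlocks (R₁ᵀ * A * S₁) (R₁ᵀ * B * S₂) (R₂ᵀ * C * S₁) (R₂ᵀ * D * S₂) := by
  simp [fromBlocks_transpose, fromBlocks_multiply, Matrix.mul_assoc]

theorem mulVec_mul_injective [Fintype n] [Fintype p] {A : Matrix m n ℝ} {B : Matrix n p ℝ}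
    (hA : Function.Injective A.mulVec) (hB : Function.Injective B.mulVec) :
    Function.Injective (A * B).mulVec := by
  rw [show (A * B).mulVec = A.mulVec ∘ B.mulVec from funext fun x => (mulVec_mulVec x A B).symm]
  exact hA.comp hB

theorem mul_mul_eq_of_mul_eq {α : Type*} [Semiring α] [Fintype n] [Fintype p]
    {A : Matrix m n α} {B : Matrix n p α} {C : Matrix m p α} (h : A * B = C) {k : Type*}
    (X : Matrix p k α) : A * (B * X) = C * X := by
  rw [← Matrix.mul_assoc, h]

theorem mul_mul_mul_eq_of_mul_mul_eq {α : Type*} [Semiring α] {q : Type*} [Fintype n]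
    [Fintype p] [Fintype q] {A : Matrix m n α} {B : Matrix n p α} {C : Matrix p q α}
    {D : Matrix m q α} (h : A * (B * C) = D) {k : Type*} (X : Matrix q k α) :
    A * (B * (C * X)) = D * X := by
  rw [← h, Matrix.mul_assoc, Matrix.mul_assoc]

theorem IsDiag.nonsing_inv [Fintype n] [DecidableEq n] {A : Matrix n n ℝ}
    (h : A.IsDiag) : A⁻¹.IsDiag := by
  rw [← h.diagonal_diag, inv_diagonal]
  exact isDiag_diagonal _

theorem commute_nonsing_inv_right [Fintype n] [DecidableEq n] {A B : Matrix n n ℝ}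
    (h : Commute A B) : Commute A B⁻¹ := by
  by_cases hB : IsUnit B.det
  · calc A * B⁻¹ = B⁻¹ * (B * A) * B⁻¹ := by rw [nonsing_inv_mul_cancel_left _ _ hB]
      _ = B⁻¹ * (A * B) * B⁻¹ := by rw [h.eq]
      _ = B⁻¹ * A := by rw [← Matrix.mul_assoc, mul_nonsing_inv_cancel_right _ _ hB]
  · -- a singular `B` has `B⁻¹ = 0`
    simp [nonsing_inv_apply_not_isUnit _ hB]

end Matrix

section NegDef

variable {m n : Type*} [Fintype m] [Fintype n]

theorem NegDef.of_sub_posSemidef {X Y : Matrix n n ℝ} (hX : NegDef X)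
    (hXY : (X - Y).PosSemidef) : NegDef Y := by
  unfold NegDef at *
  convert hX.add_posSemidef hXY using 1
  abel

theorem NegDef.transpose_mul_mul {X : Matrix n n ℝ} (hX : NegDef X) {R : Matrix n m ℝ}
    (hR : Function.Injective R.mulVec) : NegDef (Rᵀ * X * R) := by
  simpa [NegDef, conjTranspose_eq_transpose_of_trivial] using
    hX.conjTranspose_mul_mul_same hR

theorem NegDef.submatrix {X : Matrix n n ℝ} (hX : NegDef X) {e : m → n}
    (he : Function.Injective e) : NegDef (X.submatrix e e) := by
  have h := PosDef.submatrix hX he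
  rwa [submatrix_neg] at h

theorem NegDef.of_fromBlocks₁₁ {p : Type*} [Fintype p] {A : Matrix n n ℝ} {B : Matrix n p ℝ}
    {C : Matrix p n ℝ} {D : Matrix p p ℝ} (h : NegDef (fromBlocks A B C D)) : NegDef A :=
  h.submatrix Sum.inl_injective

theorem NegDef.of_fromBlocks₂₂ {p : Type*} [Fintype p] {A : Matrix n n ℝ} {B : Matrix n p ℝ}
    {C : Matrix p n ℝ} {D : Matrix p p ℝ} (h : NegDef (fromBlocks A B C D)) : NegDef D :=
  h.submatrix Sum.inr_injective

end NegDef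

section Slack

variable {m n : Type*} [Fintype m]

theorem isUnit_of_negDef_slack [DecidableEq m] {Q G M : Matrix m m ℝ} (c : ℝ) (hQ : Q.PosDef)
    (h : NegDef (Q - G - Gᵀ + c • (Gᵀ * M * G))) : IsUnit G := by
  by_contra hG
  rw [isUnit_iff_isUnit_det, isUnit_iff_ne_zero, not_not] at hG
  obtain ⟨v, hv, hGv⟩ := exists_mulVec_eq_zero_iff.mpr hG
  have hneg := h.dotProduct_mulVec_pos hv
  have hpos := hQ.dotProduct_mulVec_pos hv
  simp only [star_trivial, neg_mulVec, add_mulVec, sub_mulVec, smul_mulVec, ← mulVec_mulVec,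
    hGv, mulVec_zero, smul_zero, sub_zero, add_zero, dotProduct_neg, dotProduct_sub,
    dotProduct_mulVec v Gᵀ, vecMul_transpose, zero_dotProduct] at hneg hpos
  linarith

theorem isUnit_of_posDef_add_transpose_sub [DecidableEq m] {H S : Matrix m m ℝ}
    (hS : S.PosSemidef) (hP : (H + Hᵀ - S).PosDef) : IsUnit H := by
  by_contra hH
  rw [isUnit_iff_isUnit_det, isUnit_iff_ne_zero, not_not] at hH
  obtain ⟨v, hv, hHv⟩ := exists_mulVec_eq_zero_iff.mpr hH
  have hpos := hP.dotProduct_mulVec_pos hv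
  have hnonneg := hS.dotProduct_mulVec_nonneg v
  simp only [star_trivial, add_mulVec, sub_mulVec, hHv, dotProduct_sub, dotProduct_add,
    dotProduct_zero, dotProduct_mulVec v Hᵀ, vecMul_transpose, zero_dotProduct] at hpos hnonneg
  linarith

theorem transpose_mul_slack_mul {E : Matrix m n ℝ} {N₀ G Q : Matrix m m ℝ} {W : Matrix m n ℝ}
    (hGW : G * W = E) (hN : N₀ * E = 0) (c : ℝ) :
    Wᵀ * (Q - G - Gᵀ + c • (Gᵀ * N₀ * G)) * W = -(Eᵀ * W + (Eᵀ * W)ᵀ - Wᵀ * Q * W) := by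
  have hWG : Wᵀ * Gᵀ = Eᵀ := by rw [← transpose_mul, hGW]
  simp only [Matrix.mul_add, Matrix.add_mul, Matrix.mul_sub, Matrix.sub_mul, Matrix.mul_smul,
    Matrix.smul_mul, Matrix.mul_assoc, hGW, mul_mul_eq_of_mul_eq hWG, hN,
    transpose_mul, transpose_transpose, Matrix.mul_zero, smul_zero, add_zero]
  abel

theorem posSemidef_inv_sub_of_slack [DecidableEq m] {H S : Matrix m m ℝ} (hS : S.PosDef)
    (hH : IsUnit H) (hP : (H + Hᵀ - S).PosDef) :
    ((H + Hᵀ - S)⁻¹ - (H⁻¹)ᵀ * S * H⁻¹).PosSemidef := by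
  have hSdet := (isUnit_iff_isUnit_det S).mp hS.isUnit
  have hSsymm : Sᵀ = S := by simpa [conjTranspose_eq_transpose_of_trivial] using hS.1.eq
  have hsq : H * S⁻¹ * Hᵀ - (H + Hᵀ - S) = (H - S) * S⁻¹ * (H - S)ᵀ := by
    simp only [Matrix.sub_mul, Matrix.mul_sub, transpose_sub, hSsymm, Matrix.mul_assoc,
      mul_nonsing_inv _ hSdet, nonsing_inv_mul _ hSdet, Matrix.mul_one, Matrix.one_mul]
    abel
  have hM : (H * S⁻¹ * Hᵀ).PosDef := by
    simpa [conjTranspose_eq_transpose_of_trivial] using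
      hS.inv.mul_mul_conjTranspose_same (vecMul_injective_iff_isUnit.mpr hH)
  have hgap := hP.posSemidef_inv_sub_inv hM (by
    simpa [hsq, conjTranspose_eq_transpose_of_trivial] using
      hS.inv.posSemidef.mul_mul_conjTranspose_same (H - S))
  rwa [Matrix.mul_inv_rev, Matrix.mul_inv_rev, nonsing_inv_nonsing_inv _ hSdet,
    ← transpose_nonsing_inv, ← Matrix.mul_assoc] at hgap

theorem posDef_of_negDef_slack [Fintype n] {E : Matrix m n ℝ} {N₀ G Q : Matrix m m ℝ}
    {W : Matrix m n ℝ} {c : ℝ} (h : NegDef (Q - G - Gᵀ + c • (Gᵀ * N₀ * G)))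
    (hGW : G * W = E) (hN : N₀ * E = 0) (hW : Function.Injective W.mulVec) :
    (Eᵀ * W + (Eᵀ * W)ᵀ - Wᵀ * Q * W).PosDef := by
  simpa [NegDef, transpose_mul_slack_mul hGW hN] using h.transpose_mul_mul hW

end Slack

section ExtendedLMI

variable {m n p r : Type*} [Fintype m] [Fintype n] [Fintype p] [Fintype r]

-- `Θ_γ(G, Q, Z) + blkdiag(c GᵀN₀G, c GᵀN₀G, 0, 0)`, with the selector `E` and its left inverse
-- `L = (EᵀE)⁻¹Eᵀ` kept abstract and the disturbance block `[[-γI, D_wᵀ], [D_w, -γI]]` as `Γ`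
def extendedLMI (E : Matrix m n ℝ) (L : Matrix n m ℝ) (N₀ : Matrix m m ℝ) (c : ℝ)
    (A B : Matrix n n ℝ) (Bv : Matrix n p ℝ) (Cm Dm : Matrix r n ℝ)
    (Γ : Matrix (p ⊕ r) (p ⊕ r) ℝ) (G Q Z : Matrix m m ℝ) :
    Matrix ((m ⊕ m) ⊕ (p ⊕ r)) ((m ⊕ m) ⊕ (p ⊕ r)) ℝ :=
  fromBlocks
    (fromBlocks (-Q + c • (Gᵀ * N₀ * G)) (E * A * L * G + E * B * L * Z)
      (E * A * L * G + E * B * L * Z)ᵀ (Q - G - Gᵀ + c • (Gᵀ * N₀ * G)))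
    (fromBlocks (E * Bv) 0 0 (Cm * L * G + Dm * L * Z)ᵀ)
    (fromBlocks (E * Bv)ᵀ 0 0 (Cm * L * G + Dm * L * Z)) Γ

-- `BRLclosed` is the case `X = P⁻¹`
def closedLoopLMI (A B : Matrix n n ℝ) (Bv : Matrix n p ℝ) (Cm Dm : Matrix r n ℝ)
    (Γ : Matrix (p ⊕ r) (p ⊕ r) ℝ) (K X P : Matrix n n ℝ) :
    Matrix ((n ⊕ n) ⊕ (p ⊕ r)) ((n ⊕ n) ⊕ (p ⊕ r)) ℝ :=
  fromBlocks (fromBlocks (-X) (A + B * K) (A + B * K)ᵀ (-P))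
    (fromBlocks Bv 0 0 (Cm + Dm * K)ᵀ) (fromBlocks Bvᵀ 0 0 (Cm + Dm * K)) Γ

theorem NegDef.closedLoopLMI_of_sub_posSemidef {A B : Matrix n n ℝ} {Bv : Matrix n p ℝ}
    {Cm Dm : Matrix r n ℝ} {Γ : Matrix (p ⊕ r) (p ⊕ r) ℝ} {K X Y P : Matrix n n ℝ}
    (h : NegDef (closedLoopLMI A B Bv Cm Dm Γ K X P)) (hXY : (Y - X).PosSemidef) :
    NegDef (closedLoopLMI A B Bv Cm Dm Γ K Y P) := by
  refine h.of_sub_posSemidef ?_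
  convert (hXY.fromBlocks_zero₂₂ (n := n)).fromBlocks_zero₂₂ (n := p ⊕ r) using 1
  simp only [closedLoopLMI, sub_eq_add_neg, fromBlocks_neg, fromBlocks_add, neg_neg,
    add_neg_cancel, neg_add_cancel, neg_zero, add_zero, add_comm (-X), fromBlocks_zero]

variable [DecidableEq n] [DecidableEq p] [DecidableEq r]

-- in the application `W = G⁻¹ E` and `Hi = (Eᵀ W)⁻¹`
theorem transpose_mul_extendedLMI_mul {E : Matrix m n ℝ} {L : Matrix n m ℝ}
    {N₀ G Q Z : Matrix m m ℝ} {W : Matrix m n ℝ} {Hi : Matrix n n ℝ}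
    (hGW : G * W = E) (hLE : L * E = 1) (hN : N₀ * E = 0) (hHi : Eᵀ * W * Hi = 1) (c : ℝ)
    (A B : Matrix n n ℝ) (Bv : Matrix n p ℝ) (Cm Dm : Matrix r n ℝ)
    (Γ : Matrix (p ⊕ r) (p ⊕ r) ℝ) :
    (fromBlocks (fromBlocks (W * Hi) 0 0 W) 0 0 (1 : Matrix (p ⊕ r) (p ⊕ r) ℝ))ᵀ *
        extendedLMI E L N₀ c A B Bv Cm Dm Γ G Q Z *
        fromBlocks (fromBlocks (W * Hi) 0 0 W) 0 0 (1 : Matrix (p ⊕ r) (p ⊕ r) ℝ) =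
      closedLoopLMI A B Bv Cm Dm Γ (L * Z * W) (Hiᵀ * (Wᵀ * Q * W) * Hi)
        (Eᵀ * W + (Eᵀ * W)ᵀ - Wᵀ * Q * W) := by
  have hWG : Wᵀ * Gᵀ = Eᵀ := by rw [← transpose_mul, hGW]
  have hEL : Eᵀ * Lᵀ = 1 := by rw [← transpose_mul, hLE, transpose_one]
  have hHi' : Eᵀ * (W * Hi) = 1 := by rw [← Matrix.mul_assoc, hHi]
  have hHiT : Hiᵀ * (Wᵀ * E) = 1 := by
    simpa [Matrix.mul_assoc] using congrArg transpose hHi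
  rw [extendedLMI, closedLoopLMI, ← fromBlocks_one (l := p) (m := r)]
  simp only [fromBlocks_transpose_mul_fromBlocks_mul_fromBlocks, transpose_mul_slack_mul hGW hN]
  simp only [transpose_mul, transpose_transpose, transpose_add, transpose_one, Matrix.mul_add,
    Matrix.add_mul, Matrix.mul_neg, Matrix.neg_mul, Matrix.mul_smul, Matrix.smul_mul,
    Matrix.mul_assoc, Matrix.mul_one, Matrix.one_mul, Matrix.mul_zero, Matrix.zero_mul, hGW,
    mul_mul_eq_of_mul_eq hGW, mul_mul_eq_of_mul_eq hWG, hLE, mul_mul_eq_of_mul_eq hEL,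
    mul_mul_eq_of_mul_eq hN, hHi', mul_mul_mul_eq_of_mul_mul_eq hHiT, smul_zero, add_zero,
    fromBlocks_one]

theorem negDef_closedLoopLMI_of_negDef_extendedLMI [DecidableEq m] {E : Matrix m n ℝ}
    {L : Matrix n m ℝ} {N₀ G Q Z : Matrix m m ℝ} {c : ℝ} {A B : Matrix n n ℝ}
    {Bv : Matrix n p ℝ} {Cm Dm : Matrix r n ℝ} {Γ : Matrix (p ⊕ r) (p ⊕ r) ℝ}
    (hLE : L * E = 1) (hN : N₀ * E = 0) (hQ : Q.PosDef)
    (h : NegDef (extendedLMI E L N₀ c A B Bv Cm Dm Γ G Q Z)) :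
    IsUnit G ∧ ∃ P : Matrix n n ℝ, P.PosDef ∧
      NegDef (closedLoopLMI A B Bv Cm Dm Γ (L * Z * G⁻¹ * E) P⁻¹ P) := by
  have hslack : NegDef (Q - G - Gᵀ + c • (Gᵀ * N₀ * G)) := h.of_fromBlocks₁₁.of_fromBlocks₂₂
  have hG : IsUnit G := isUnit_of_negDef_slack c hQ hslack
  have hE : Function.Injective E.mulVec := fun x y hxy => by
    simpa [mulVec_mulVec, hLE] using congrArg L.mulVec hxy
  set W := G⁻¹ * E
  have hGW : G * W = E := mul_nonsing_inv_cancel_left _ _ ((isUnit_iff_isUnit_det G).mp hG)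
  have hW : Function.Injective W.mulVec :=
    mulVec_mul_injective (mulVec_injective_of_isUnit (isUnit_nonsing_inv_iff.mpr hG)) hE
  have hP := posDef_of_negDef_slack hslack hGW hN hW
  have hS : (Wᵀ * Q * W).PosDef := by
    simpa [conjTranspose_eq_transpose_of_trivial] using hQ.conjTranspose_mul_mul_same hW
  have hH := isUnit_of_posDef_add_transpose_sub hS.posSemidef hP
  have hR : Function.Injective (fromBlocks (fromBlocks (W * (Eᵀ * W)⁻¹) 0 0 W) 0 0
      (1 : Matrix (p ⊕ r) (p ⊕ r) ℝ)).mulVec :=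
    fromBlocks_mulVec_injective (fromBlocks_mulVec_injective
      (mulVec_mul_injective hW (mulVec_injective_of_isUnit (isUnit_nonsing_inv_iff.mpr hH))) hW)
      (mulVec_injective_of_isUnit isUnit_one)
  have hcongr := h.transpose_mul_mul hR
  rw [transpose_mul_extendedLMI_mul hGW hLE hN
    (mul_nonsing_inv _ ((isUnit_iff_isUnit_det _).mp hH))] at hcongr
  refine ⟨hG, _, hP, ?_⟩
  simpa only [W, Matrix.mul_assoc] using
    hcongr.closedLoopLMI_of_sub_posSemidef (posSemidef_inv_sub_of_slack hS hH hP)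

end ExtendedLMI

section Cliques

variable {N q : ℕ} {dims : Fin N → ℕ} {C : Fin q → Finset (Fin N)}

theorem Emat_mulVec_apply (x : Idx dims → ℝ) (s : CIdx dims C) :
    (Emat dims C *ᵥ x) s = x ⟨s.2.1.1, s.2.2⟩ := by
  simp [Emat, mulVec, dotProduct]

theorem mem_of_Emat_ne_zero {s : CIdx dims C} {i : Idx dims} (h : Emat dims C s i ≠ 0) :
    i.1 ∈ C s.1 := by
  unfold Emat at h
  split_ifs at h with hsi
  · exact hsi ▸ s.2.1.2
  · exact absurd rfl h

theorem Emat_mulVec_injective (hcover : ∀ i, ∃ k, i ∈ C k) :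
    Function.Injective (Emat dims C).mulVec := by
  intro x y hxy
  funext ⟨i, a⟩
  obtain ⟨k, hk⟩ := hcover i
  simpa [Emat_mulVec_apply] using congrFun hxy ⟨k, ⟨i, hk⟩, a⟩

theorem isDiag_transpose_Emat_mul_Emat : ((Emat dims C)ᵀ * Emat dims C).IsDiag := by
  intro i j hij
  refine Finset.sum_eq_zero fun s _ => ?_
  simp only [transpose_apply, Emat]
  split_ifs with hi hj <;> simp_all

theorem isUnit_det_transpose_Emat_mul_Emat (hcover : ∀ i, ∃ k, i ∈ C k) :
    IsUnit ((Emat dims C)ᵀ * Emat dims C).det := by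
  rw [← isUnit_iff_isUnit_det]
  simpa [conjTranspose_eq_transpose_of_trivial] using
    (PosDef.conjTranspose_mul_self _ (Emat_mulVec_injective hcover)).isUnit

theorem Emat_leftInverse (hcover : ∀ i, ∃ k, i ∈ C k) :
    ((Emat dims C)ᵀ * Emat dims C)⁻¹ * (Emat dims C)ᵀ * Emat dims C = 1 := by
  rw [Matrix.mul_assoc, nonsing_inv_mul _ (isUnit_det_transpose_Emat_mul_Emat hcover)]

theorem N0_mul_Emat (hcover : ∀ i, ∃ k, i ∈ C k) : N0 dims C * Emat dims C = 0 := by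
  rw [N0, Matrix.sub_mul, Matrix.one_mul, Matrix.mul_assoc, Matrix.mul_assoc,
    ← Matrix.mul_assoc _ _ (Emat dims C), Emat_leftInverse hcover, Matrix.mul_one, sub_self]

def cliqueProj (k : Fin q) : Matrix (CIdx dims C) (CIdx dims C) ℝ :=
  diagonal fun s => if s.1 = k then 1 else 0

theorem cliqueBlkDiag_iff_forall_commute {X : Matrix (CIdx dims C) (CIdx dims C) ℝ} :
    CliqueBlkDiag dims C X ↔ ∀ k, Commute (cliqueProj (dims := dims) k) X := by
  constructor
  · intro hX k
    ext s t
    by_cases hst : s.1 = t.1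
    · simp [cliqueProj, hst]
    · simp [cliqueProj, hX s t hst]
  · intro h s t hst
    simpa [cliqueProj, Ne.symm hst] using congrFun (congrFun (h s.1).eq s) t

theorem CliqueBlkDiag.mul {X Y : Matrix (CIdx dims C) (CIdx dims C) ℝ}
    (hX : CliqueBlkDiag dims C X) (hY : CliqueBlkDiag dims C Y) :
    CliqueBlkDiag dims C (X * Y) := by
  rw [cliqueBlkDiag_iff_forall_commute] at *
  exact fun k => (hX k).mul_right (hY k)

theorem CliqueBlkDiag.nonsing_inv {X : Matrix (CIdx dims C) (CIdx dims C) ℝ}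
    (hX : CliqueBlkDiag dims C X) : CliqueBlkDiag dims C X⁻¹ := by
  rw [cliqueBlkDiag_iff_forall_commute] at *
  exact fun k => commute_nonsing_inv_right (hX k)

theorem Sparse.isDiag_mul {Gr : SimpleGraph (Fin N)} {D X : Matrix (Idx dims) (Idx dims) ℝ}
    (hD : D.IsDiag) (hX : Sparse Gr dims X) : Sparse Gr dims (D * X) := by
  intro i j hij hadj a b
  rw [← hD.diagonal_diag, diagonal_mul, hX i j hij hadj a b, mul_zero]

theorem sparse_transpose_Emat_mul_mul {Gr : SimpleGraph (Fin N)} (hass : Assumption1 Gr C)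
    {M : Matrix (CIdx dims C) (CIdx dims C) ℝ} (hM : CliqueBlkDiag dims C M) :
    Sparse Gr dims ((Emat dims C)ᵀ * M * Emat dims C) := by
  intro i j hij hadj a b
  simp only [mul_apply, transpose_apply, Finset.sum_mul]
  refine Finset.sum_eq_zero fun t _ => Finset.sum_eq_zero fun s _ => ?_
  by_contra hne
  obtain ⟨hs, hst⟩ := mul_ne_zero_iff.mp (mul_ne_zero_iff.mp hne).1
  have hk : s.1 = t.1 := by_contra fun h => hst (hM s t h)
  exact hadj <| (hass.2 i j hij).mp
    ⟨s.1, mem_of_Emat_ne_zero hs, hk ▸ mem_of_Emat_ne_zero (mul_ne_zero_iff.mp hne).2⟩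

theorem sparse_gainCl {Gr : SimpleGraph (Fin N)} (hass : Assumption1 Gr C)
    {Zt Gt : Matrix (CIdx dims C) (CIdx dims C) ℝ} (hZt : CliqueBlkDiag dims C Zt)
    (hGt : CliqueBlkDiag dims C Gt) : Sparse Gr dims (gainCl dims C Zt Gt) := by
  have hK : gainCl dims C Zt Gt = ((Emat dims C)ᵀ * Emat dims C)⁻¹ *
      ((Emat dims C)ᵀ * (Zt * Gt⁻¹) * Emat dims C) := by
    simp only [gainCl, Matrix.mul_assoc]
  rw [hK]
  exact Sparse.isDiag_mul isDiag_transpose_Emat_mul_Emat.nonsing_inv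
    (sparse_transpose_Emat_mul_mul hass (hZt.mul hGt.nonsing_inv))

end Cliques

theorem Theta_add_Pert_eq_extendedLMI {N q mv l : ℕ} (dims : Fin N → ℕ)
    (C : Fin q → Finset (Fin N)) (A B : Matrix (Idx dims) (Idx dims) ℝ)
    (Bv : Matrix (Idx dims) (Fin mv) ℝ) (Cm Dm : Matrix (Fin l) (Idx dims) ℝ)
    (Dw : Matrix (Fin l) (Fin mv) ℝ) (γ ρ : ℝ)
    (Gt Qt Zt : Matrix (CIdx dims C) (CIdx dims C) ℝ) :
    Theta dims C A B Bv Cm Dm Dw γ Gt Qt Zt + Pert dims C mv l (ρ • (Gtᵀ * N0 dims C * Gt)) =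
      extendedLMI (Emat dims C) (((Emat dims C)ᵀ * Emat dims C)⁻¹ * (Emat dims C)ᵀ) (N0 dims C)
        ρ A B Bv Cm Dm
        (fromBlocks (-(γ • (1 : Matrix (Fin mv) (Fin mv) ℝ))) Dwᵀ Dw
          (-(γ • (1 : Matrix (Fin l) (Fin l) ℝ)))) Gt Qt Zt := by
  simp only [Theta, Pert, tilde, extendedLMI, fromBlocks_add, add_zero, Matrix.mul_assoc]

theorem BRLclosed_gainCl_eq_closedLoopLMI {N q mv l : ℕ} (dims : Fin N → ℕ)
    (C : Fin q → Finset (Fin N)) (A B : Matrix (Idx dims) (Idx dims) ℝ)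
    (Bv : Matrix (Idx dims) (Fin mv) ℝ) (Cm Dm : Matrix (Fin l) (Idx dims) ℝ)
    (Dw : Matrix (Fin l) (Fin mv) ℝ) (γ : ℝ) (Gt Zt : Matrix (CIdx dims C) (CIdx dims C) ℝ)
    (P : Matrix (Idx dims) (Idx dims) ℝ) :
    BRLclosed dims A B Bv Cm Dm Dw γ (gainCl dims C Zt Gt) P =
      closedLoopLMI A B Bv Cm Dm
        (fromBlocks (-(γ • (1 : Matrix (Fin mv) (Fin mv) ℝ))) Dwᵀ Dw
          (-(γ • (1 : Matrix (Fin l) (Fin l) ℝ))))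
        (((Emat dims C)ᵀ * Emat dims C)⁻¹ * (Emat dims C)ᵀ * Zt * Gt⁻¹ * Emat dims C) P⁻¹ P :=
  rfl

theorem stmt19_general {N q mv l : ℕ} (Gr : SimpleGraph (Fin N)) (dims : Fin N → ℕ)
    (C : Fin q → Finset (Fin N)) (hass : Assumption1 Gr C)
    (A B : Matrix (Idx dims) (Idx dims) ℝ) (Bv : Matrix (Idx dims) (Fin mv) ℝ)
    (Cm Dm : Matrix (Fin l) (Idx dims) ℝ) (Dw : Matrix (Fin l) (Fin mv) ℝ)
    (γ : ℝ)
    (Zt Gt Qt : Matrix (CIdx dims C) (CIdx dims C) ℝ)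
    (hZt : CliqueBlkDiag dims C Zt) (hGt : CliqueBlkDiag dims C Gt) (hQpd : Qt.PosDef)
    (ρ : ℝ)
    (h : NegDef (Theta dims C A B Bv Cm Dm Dw γ Gt Qt Zt +
        Pert dims C mv l (ρ • (Gtᵀ * N0 dims C * Gt)))) :
    IsUnit Gt ∧ Sparse Gr dims (gainCl dims C Zt Gt) ∧
    ∃ P : Matrix (Idx dims) (Idx dims) ℝ, P.PosDef ∧
      NegDef (BRLclosed dims A B Bv Cm Dm Dw γ (gainCl dims C Zt Gt) P) := by
  rw [Theta_add_Pert_eq_extendedLMI] at h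
  obtain ⟨hG, P, hP, hLMI⟩ := negDef_closedLoopLMI_of_negDef_extendedLMI
    (Emat_leftInverse hass.1) (N0_mul_Emat hass.1) hQpd h
  refine ⟨hG, sparse_gainCl hass hZt hGt, P, hP, ?_⟩
  rwa [BRLclosed_gainCl_eq_closedLoopLMI]

/-- Lemma 9: every element of `𝒦̂_{𝒮,ext}^{∞,γ}` belongs to `𝒦_all^{∞,γ}`. -/
theorem stmt19 {N q mv l : ℕ} (Gr : SimpleGraph (Fin N)) (dims : Fin N → ℕ)
    (C : Fin q → Finset (Fin N)) (hclq : IsCliques Gr C) (hass : Assumption1 Gr C)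
    (A B : Matrix (Idx dims) (Idx dims) ℝ) (Bv : Matrix (Idx dims) (Fin mv) ℝ)
    (Cm Dm : Matrix (Fin l) (Idx dims) ℝ) (Dw : Matrix (Fin l) (Fin mv) ℝ)
    (γ : ℝ) (hγ : 0 < γ)
    (Zt Gt Qt : Matrix (CIdx dims C) (CIdx dims C) ℝ)
    (hZt : CliqueBlkDiag dims C Zt) (hGt : CliqueBlkDiag dims C Gt) (hQpd : Qt.PosDef)
    (ρ : ℝ)
    (h : NegDef (Theta dims C A B Bv Cm Dm Dw γ Gt Qt Zt +
        Pert dims C mv l (ρ • (Gtᵀ * N0 dims C * Gt)))) :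
    IsUnit Gt ∧ Sparse Gr dims (gainCl dims C Zt Gt) ∧
    ∃ P : Matrix (Idx dims) (Idx dims) ℝ, P.PosDef ∧
      NegDef (BRLclosed dims A B Bv Cm Dm Dw γ (gainCl dims C Zt Gt) P) :=
  stmt19_general Gr dims C hass A B Bv Cm Dm Dw γ Zt Gt Qt hZt hGt hQpd ρ h
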